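/- arXiv:1805.06415 — 4 statements merged into one kernel-verified Lean document; each statement's English description precedes it below -/
import Mathlib

section
/- For every real α ≥ 1 there exists a constant C > 0 such that for all complex numbers u, v one has | |u+v|^α − |u|^α − |v|^α | ≤ C ( |u|^{α−1} |v| + |v|^{α−1} |u| ). -/
open Real

lemma rpow_sub_rpow_le (α : ℝ) (hα : 1 ≤ α) {x y : ℝ} (hy : 0 ≤ y) (hxy : y ≤ x) :
    x ^ α - y ^ α ≤ α * x ^ (α - 1) * (x - y) := by
  have hx : 0 ≤ x := hy.trans hxy
  rcases eq_or_lt_of_le hx with h0 | hx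
  · have : y = 0 := le_antisymm (hxy.trans h0.symm.le) hy
    subst this
    simp [← h0, Real.zero_rpow (by linarith : α ≠ 0)]
  · have hs : -1 ≤ y / x - 1 := by
      have : 0 ≤ y / x := div_nonneg hy hx.le
      linarith
    have hb := one_add_mul_self_le_rpow_one_add hs hα
    rw [add_sub_cancel] at hb
    rw [Real.div_rpow hy hx.le] at hb
    have hxα : 0 < x ^ α := Real.rpow_pos_of_pos hx α
    have h2 : (1 + α * (y / x - 1)) * x ^ α ≤ y ^ α := (le_div_iff₀ hxα).mp hb
    have hxx : x ^ α = x ^ (α - 1) * x := by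
      rw [← Real.rpow_add_one (ne_of_gt hx)]; ring_nf
    have hd : (y / x - 1) * x = y - x := by field_simp
    have key : α * (y / x - 1) * x ^ α = α * x ^ (α - 1) * (y - x) := by
      rw [hxx, show α * (y / x - 1) * (x ^ (α - 1) * x) = α * x ^ (α - 1) * ((y / x - 1) * x) by ring, hd]
    nlinarith [h2, key]

lemma abs_rpow_sub_rpow_le (α : ℝ) (hα : 1 ≤ α) {t a b : ℝ} (ht : 0 ≤ t) (ha : 0 ≤ a)
    (hb : 0 ≤ b) (h1 : |t - a| ≤ b) (h2 : t ≤ a + b) :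
    |t ^ α - a ^ α| ≤ α * (a + b) ^ (α - 1) * b := by
  have hα1 : (0:ℝ) ≤ α - 1 := by linarith
  have hα0 : (0:ℝ) ≤ α := by linarith
  obtain ⟨hl, hr⟩ := abs_le.mp h1
  rcases le_total a t with h | h
  · rw [abs_of_nonneg (sub_nonneg.mpr (Real.rpow_le_rpow ha h hα0))]
    refine (rpow_sub_rpow_le α hα ha h).trans ?_
    have hmono : t ^ (α - 1) ≤ (a + b) ^ (α - 1) := Real.rpow_le_rpow ht h2 hα1
    have h3 : t - a ≤ b := by linarith
    have htp : (0:ℝ) ≤ t ^ (α - 1) := Real.rpow_nonneg ht _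
    nlinarith [mul_le_mul hmono h3 (by linarith) (Real.rpow_nonneg (by linarith) (α - 1))]
  · rw [abs_sub_comm, abs_of_nonneg (sub_nonneg.mpr (Real.rpow_le_rpow ht h hα0))]
    refine (rpow_sub_rpow_le α hα ht h).trans ?_
    have hmono : a ^ (α - 1) ≤ (a + b) ^ (α - 1) :=
      Real.rpow_le_rpow ha (by linarith) hα1
    have h3 : a - t ≤ b := by linarith
    have hap : (0:ℝ) ≤ a ^ (α - 1) := Real.rpow_nonneg ha _
    nlinarith [mul_le_mul hmono h3 (by linarith) (Real.rpow_nonneg (by linarith) (α - 1))]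

lemma main_real (α : ℝ) (hα : 1 ≤ α) {a b t : ℝ} (ha : 0 ≤ a) (hb : 0 ≤ b) (hba : b ≤ a)
    (ht : 0 ≤ t) (h1 : |t - a| ≤ b) (h2 : t ≤ a + b) :
    |t ^ α - a ^ α - b ^ α| ≤
      (α * 2 ^ (α - 1) + 1) * (a ^ (α - 1) * b + b ^ (α - 1) * a) := by
  have hα1 : (0:ℝ) ≤ α - 1 := by linarith
  have hbα : (0:ℝ) ≤ b ^ α := Real.rpow_nonneg hb _
  have tri : |t ^ α - a ^ α - b ^ α| ≤ |t ^ α - a ^ α| + b ^ α := by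
    have := abs_sub (t ^ α - a ^ α) (b ^ α)
    calc |t ^ α - a ^ α - b ^ α| ≤ |t ^ α - a ^ α| + |b ^ α| := abs_sub _ _
      _ = |t ^ α - a ^ α| + b ^ α := by rw [abs_of_nonneg hbα]
  have step1 := abs_rpow_sub_rpow_le α hα ht ha hb h1 h2
  -- (a+b)^(α-1) ≤ 2^(α-1) * a^(α-1)
  have step2 : (a + b) ^ (α - 1) ≤ 2 ^ (α - 1) * a ^ (α - 1) := by
    calc (a + b) ^ (α - 1) ≤ (2 * a) ^ (α - 1) :=
          Real.rpow_le_rpow (by linarith) (by linarith) hα1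
      _ = 2 ^ (α - 1) * a ^ (α - 1) := Real.mul_rpow (by norm_num) ha
  -- b^α ≤ b^(α-1) * a
  have step3 : b ^ α ≤ b ^ (α - 1) * a := by
    rcases eq_or_lt_of_le hb with h0 | h0
    · rw [← h0, Real.zero_rpow (by linarith : α ≠ 0)]
      positivity
    · have : b ^ α = b ^ (α - 1) * b := by
        rw [← Real.rpow_add_one (ne_of_gt h0)]; ring_nf
      rw [this]
      exact mul_le_mul_of_nonneg_left hba (Real.rpow_nonneg hb _)
  have hX : (0:ℝ) ≤ a ^ (α - 1) * b := mul_nonneg (Real.rpow_nonneg ha _) hb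
  have hY : (0:ℝ) ≤ b ^ (α - 1) * a := mul_nonneg (Real.rpow_nonneg hb _) ha
  have h2p : (0:ℝ) < 2 ^ (α - 1) := Real.rpow_pos_of_pos (by norm_num) _
  have hαb : 0 ≤ α * b := mul_nonneg (by linarith) hb
  have step12 : α * (a + b) ^ (α - 1) * b ≤ α * 2 ^ (α - 1) * (a ^ (α - 1) * b) := by
    nlinarith [mul_le_mul_of_nonneg_left step2 hαb]
  have hA : (0:ℝ) ≤ α * 2 ^ (α - 1) := mul_nonneg (by linarith) h2p.le
  have hAY : (0:ℝ) ≤ α * 2 ^ (α - 1) * (b ^ (α - 1) * a) := mul_nonneg hA hY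
  have expand : (α * 2 ^ (α - 1) + 1) * (a ^ (α - 1) * b + b ^ (α - 1) * a)
      = α * 2 ^ (α - 1) * (a ^ (α - 1) * b) + α * 2 ^ (α - 1) * (b ^ (α - 1) * a)
        + a ^ (α - 1) * b + b ^ (α - 1) * a := by ring
  linarith [tri, step1, step12, step3]

theorem fPE1_estimate (α : ℝ) (hα : 1 ≤ α) :
    ∃ C > (0 : ℝ), ∀ u v : ℂ,
      |‖u + v‖ ^ α - ‖u‖ ^ α - ‖v‖ ^ α| ≤
        C * (‖u‖ ^ (α - 1) * ‖v‖
          + ‖v‖ ^ (α - 1) * ‖u‖) := by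
  refine ⟨α * 2 ^ (α - 1) + 1, by positivity, ?_⟩
  have key : ∀ u v : ℂ, ‖v‖ ≤ ‖u‖ →
      |‖u + v‖ ^ α - ‖u‖ ^ α - ‖v‖ ^ α| ≤
        (α * 2 ^ (α - 1) + 1) * (‖u‖ ^ (α - 1) * ‖v‖
          + ‖v‖ ^ (α - 1) * ‖u‖) := by
    intro u v hvu
    apply main_real α hα (norm_nonneg u) (norm_nonneg v) hvu
      (norm_nonneg (u + v))
    · have := abs_norm_sub_norm_le (u + v) u
      simpa using this
    · exact norm_add_le u v
  intro u v
  rcases le_total (‖v‖) (‖u‖) with h | h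
  · exact key u v h
  · have h2 := key v u h
    rw [add_comm v u] at h2
    have e1 : |‖u + v‖ ^ α - ‖v‖ ^ α - ‖u‖ ^ α|
        = |‖u + v‖ ^ α - ‖u‖ ^ α - ‖v‖ ^ α| := by
      ring_nf
    linarith [h2, e1.symm.le,
      le_of_eq (show (α * 2 ^ (α - 1) + 1) * (‖v‖ ^ (α - 1) * ‖u‖
          + ‖u‖ ^ (α - 1) * ‖v‖)
        = (α * 2 ^ (α - 1) + 1) * (‖u‖ ^ (α - 1) * ‖v‖
          + ‖v‖ ^ (α - 1) * ‖u‖) by ring)]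
end

section
/- For every real α ≥ 1 there exists a constant C > 0 such that for all complex numbers u, v one has | |u+v|^{α−2}(u+v)² − |u|^{α−2}u² − |v|^{α−2}v² | ≤ C ( |u|^{α−1} |v| + |v|^{α−1} |u| ), where by convention the expression |z|^{α−2} z² is taken to be 0 when z = 0. -/
open Complex

noncomputable def gfun (z : ℂ) : ℂ := (((‖z‖)⁻¹ : ℝ) : ℂ) * z ^ 2

lemma gfun_abs_le (z : ℂ) : ‖gfun z‖ ≤ ‖z‖ := by
  by_cases hz : z = 0
  · simp [gfun, hz]
  · have h : ‖z‖ ≠ 0 := by simpa using hz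
    simp only [gfun, norm_mul, norm_pow, Complex.norm_real, Real.norm_eq_abs,
      _root_.abs_of_nonneg (inv_nonneg.2 (norm_nonneg z))]
    rw [pow_two, ← mul_assoc, inv_mul_cancel₀ h, one_mul]

lemma gfun_lip (a b : ℂ) : ‖gfun a - gfun b‖ ≤ 3 * ‖a - b‖ := by
  by_cases ha : a = 0
  · subst ha
    have h1 : gfun 0 = 0 := by simp [gfun]
    rw [h1, zero_sub, norm_neg, zero_sub, norm_neg]
    have := gfun_abs_le b
    linarith [norm_nonneg b]
  by_cases hb : b = 0
  · subst hb
    have h1 : gfun 0 = 0 := by simp [gfun]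
    rw [h1, sub_zero, sub_zero]
    have := gfun_abs_le a
    linarith [norm_nonneg a]
  have ha' : ‖a‖ ≠ 0 := by simpa using ha
  have hb' : ‖b‖ ≠ 0 := by simpa using hb
  have ha'' : (((‖a‖ : ℝ)) : ℂ) ≠ 0 := by exact_mod_cast ha'
  have hb'' : (((‖b‖ : ℝ)) : ℂ) ≠ 0 := by exact_mod_cast hb'
  have key : gfun a - gfun b =
      ((‖b‖ : ℝ) : ℂ) * a * (a - b) / (((‖a‖ : ℝ) : ℂ) * ((‖b‖ : ℝ) : ℂ))
      + b * a * (((‖b‖ - ‖a‖ : ℝ)) : ℂ) / (((‖a‖ : ℝ) : ℂ) * ((‖b‖ : ℝ) : ℂ))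
      + b * ((‖a‖ : ℝ) : ℂ) * (a - b) / (((‖a‖ : ℝ) : ℂ) * ((‖b‖ : ℝ) : ℂ)) := by
    unfold gfun
    push_cast
    field_simp
    ring
  rw [key]
  have habs : |‖b‖ - ‖a‖| ≤ ‖a - b‖ := by
    rw [← norm_neg (a - b), neg_sub]
    exact abs_norm_sub_norm_le b a
  set x := ‖a‖ with hx
  set y := ‖b‖ with hy
  set d := ‖a - b‖ with hd
  set e := |y - x| with he
  calc ‖_‖ ≤ _ + _ + _ :=
        (norm_add_le _ _).trans (add_le_add_left (norm_add_le _ _) _)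
    _ ≤ 3 * d := by
        simp only [norm_div, norm_mul, Complex.norm_real, Real.norm_eq_abs,
          _root_.abs_of_nonneg (show 0 ≤ x from norm_nonneg a), _root_.abs_of_nonneg (show 0 ≤ y from norm_nonneg b), ← hx, ← hy, ← hd, ← he]
        have h1 : y * x * d / (x * y) = d := by field_simp
        have h2 : y * x * e / (x * y) = e := by field_simp
        rw [h1, h2]
        have : e ≤ d := habs
        linarith

lemma rpow_diff_mul_le {β x y : ℝ} (hy : 0 ≤ y) (hyx : y ≤ x) :
    (x ^ β - y ^ β) * y ≤ max 1 β * (x ^ β * (x - y)) := by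
  rcases eq_or_lt_of_le hy with hy0 | hy0
  · rw [← hy0]
    have hx' : (0:ℝ) ≤ x := le_trans hy hyx
    have h1 : (0:ℝ) ≤ x ^ β := Real.rpow_nonneg hx' β
    have h2 : (0:ℝ) ≤ max 1 β := le_trans zero_le_one (le_max_left _ _)
    have h3 : x - 0 = x := sub_zero x
    rw [mul_zero, h3]
    positivity
  have hx0 : 0 < x := lt_of_lt_of_le hy0 hyx
  set t := y / x with ht
  have ht0 : 0 < t := div_pos hy0 hx0
  have ht1 : t ≤ 1 := by rw [div_le_one hx0]; exact hyx
  have hyt : y = x * t := by rw [ht]; field_simp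
  have hM : (1:ℝ) ≤ max 1 β := le_max_left _ _
  have hkey : 1 - t ^ β ≤ max 1 β * (1 - t) := by
    by_cases hb : β ≤ 1
    · have h1 : t ^ (1:ℝ) ≤ t ^ β := Real.rpow_le_rpow_of_exponent_ge ht0 ht1 hb
      rw [Real.rpow_one] at h1
      nlinarith
    · push_neg at hb
      have hber := one_add_mul_self_le_rpow_one_add (s := t - 1) (by linarith) hb.le
      have h2 : (1 + (t-1) : ℝ) = t := by ring
      rw [h2] at hber
      have : max 1 β = β := max_eq_right hb.le
      nlinarith
  have hyβ : y ^ β = x ^ β * t ^ β := by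
    rw [hyt, Real.mul_rpow hx0.le ht0.le]
  have hxβ : (0:ℝ) ≤ x ^ β := Real.rpow_nonneg hx0.le β
  have htx : t * x = y := by rw [hyt]; ring
  calc (x ^ β - y ^ β) * y = x ^ β * ((1 - t ^ β) * y) := by rw [hyβ]; ring
    _ ≤ x ^ β * (max 1 β * ((1 - t) * x)) := by
        apply mul_le_mul_of_nonneg_left _ hxβ
        have h3 : (1 - t ^ β) * y ≤ (max 1 β * (1 - t)) * y := by
          apply mul_le_mul_of_nonneg_right hkey hy
        have h4 : (max 1 β * (1 - t)) * y ≤ (max 1 β * (1 - t)) * x := by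
          apply mul_le_mul_of_nonneg_left hyx
          have : 0 ≤ 1 - t := by linarith
          positivity
        calc (1 - t ^ β) * y ≤ (max 1 β * (1 - t)) * y := h3
          _ ≤ (max 1 β * (1 - t)) * x := h4
          _ = max 1 β * ((1 - t) * x) := by ring
    _ = max 1 β * (x ^ β * (x - y)) := by
        have : (1 - t) * x = x - y := by rw [← htx]; ring
        rw [this]; ring

noncomputable def F (α : ℝ) (z : ℂ) : ℂ := ((‖z‖ ^ (α - 2) : ℝ) : ℂ) * z ^ 2

lemma F_eq (α : ℝ) (z : ℂ) : F α z = ((‖z‖ ^ (α - 1) : ℝ) : ℂ) * gfun z := by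
  by_cases hz : z = 0
  · simp [F, gfun, hz]
  · have h : (0:ℝ) < ‖z‖ := by
      simpa [norm_pos_iff] using hz
    have hr : ‖z‖ ^ (α - 2) = ‖z‖ ^ (α - 1) * (‖z‖)⁻¹ := by
      rw [← Real.rpow_neg_one (‖z‖), ← Real.rpow_add h]
      ring_nf
    rw [F, gfun, hr]
    push_cast
    ring

lemma F_abs_le (α : ℝ) (z : ℂ) :
    ‖F α z‖ ≤ ‖z‖ ^ (α - 1) * ‖z‖ := by
  rw [F_eq]
  rw [norm_mul, Complex.norm_real, Real.norm_eq_abs, _root_.abs_of_nonneg (Real.rpow_nonneg (norm_nonneg z) _)]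
  exact mul_le_mul_of_nonneg_left (gfun_abs_le z) (Real.rpow_nonneg (norm_nonneg z) _)

lemma key_half (α : ℝ) (hα : 1 ≤ α) (a b : ℂ) (hba : ‖b‖ ≤ ‖a‖) :
    ‖F α a - F α b‖ ≤
      (3 + max 1 (α - 1)) * (‖a‖ ^ (α - 1) * ‖a - b‖) := by
  set β := α - 1 with hβdef
  have hβ : 0 ≤ β := by simp [hβdef]; linarith
  set x := ‖a‖ with hx
  set y := ‖b‖ with hy
  have hy0 : 0 ≤ y := norm_nonneg b
  have hx0 : 0 ≤ x := norm_nonneg a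
  have hd0 : 0 ≤ ‖a - b‖ := norm_nonneg _
  have hxβ : (0:ℝ) ≤ x ^ β := Real.rpow_nonneg hx0 β
  have hmono : y ^ β ≤ x ^ β := Real.rpow_le_rpow hy0 hba hβ
  have hsplit : F α a - F α b =
      ((x ^ β : ℝ) : ℂ) * (gfun a - gfun b) + ((x ^ β - y ^ β : ℝ) : ℂ) * gfun b := by
    rw [F_eq, F_eq]
    push_cast
    ring
  rw [hsplit]
  have hdd : x - y ≤ ‖a - b‖ := by
    have := abs_norm_sub_norm_le a b
    have h2 := abs_le.mp this
    linarith [h2.1, h2.2]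
  calc ‖_‖
      ≤ ‖((x ^ β : ℝ) : ℂ) * (gfun a - gfun b)‖
        + ‖((x ^ β - y ^ β : ℝ) : ℂ) * gfun b‖ := norm_add_le _ _
    _ ≤ x ^ β * (3 * ‖a - b‖) + (x ^ β - y ^ β) * y := by
        apply add_le_add
        · rw [norm_mul, Complex.norm_real, Real.norm_eq_abs, _root_.abs_of_nonneg hxβ]
          exact mul_le_mul_of_nonneg_left (gfun_lip a b) hxβ
        · rw [norm_mul, Complex.norm_real, Real.norm_eq_abs, _root_.abs_of_nonneg (by linarith : (0:ℝ) ≤ x ^ β - y ^ β)]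
          exact mul_le_mul_of_nonneg_left (gfun_abs_le b) (by linarith)
    _ ≤ x ^ β * (3 * ‖a - b‖) + max 1 β * (x ^ β * (x - y)) :=
        add_le_add_right (rpow_diff_mul_le hy0 hba) _
    _ ≤ (3 + max 1 β) * (x ^ β * ‖a - b‖) := by
        have hM : (0:ℝ) ≤ max 1 β := le_trans zero_le_one (le_max_left _ _)
        nlinarith [mul_le_mul_of_nonneg_left hdd hxβ, mul_nonneg hM hxβ]

lemma key_sym (α : ℝ) (hα : 1 ≤ α) (a b : ℂ) :
    ‖F α a - F α b‖ ≤
      (3 + max 1 (α - 1)) *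
        ((‖a‖ ^ (α - 1) + ‖b‖ ^ (α - 1)) * ‖a - b‖) := by
  have hM : (0:ℝ) ≤ 3 + max 1 (α - 1) :=
    by positivity
  have hd0 : 0 ≤ ‖a - b‖ := norm_nonneg _
  rcases le_total (‖b‖) (‖a‖) with h | h
  · refine (key_half α hα a b h).trans ?_
    have hb0 : (0:ℝ) ≤ ‖b‖ ^ (α - 1) := Real.rpow_nonneg (norm_nonneg b) _
    have := mul_le_mul_of_nonneg_right
      (le_add_of_nonneg_right hb0 : ‖a‖ ^ (α - 1) ≤ _) hd0
    exact mul_le_mul_of_nonneg_left this hM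
  · have hswap : ‖F α a - F α b‖ = ‖F α b - F α a‖ := by
      rw [← norm_neg, neg_sub]
    have hba : ‖b - a‖ = ‖a - b‖ := by
      rw [← norm_neg, neg_sub]
    rw [hswap]
    refine (key_half α hα b a h).trans ?_
    rw [hba]
    have hb0 : (0:ℝ) ≤ ‖a‖ ^ (α - 1) := Real.rpow_nonneg (norm_nonneg a) _
    have := mul_le_mul_of_nonneg_right
      (le_add_of_nonneg_left hb0 : ‖b‖ ^ (α - 1) ≤ _) hd0
    exact mul_le_mul_of_nonneg_left this hM

lemma main_half (α : ℝ) (hα : 1 ≤ α) (u v : ℂ) (hvu : ‖v‖ ≤ ‖u‖) :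
    ‖F α (u + v) - F α u - F α v‖ ≤
      ((3 + max 1 (α - 1)) * ((2:ℝ) ^ (α - 1) + 1) + 1) *
        (‖u‖ ^ (α - 1) * ‖v‖
          + ‖v‖ ^ (α - 1) * ‖u‖) := by
  set β := α - 1 with hβdef
  have hβ : 0 ≤ β := by simp [hβdef]; linarith
  set K := (3:ℝ) + max 1 β with hK
  have hK0 : (0:ℝ) ≤ K := by positivity
  have hu0 : 0 ≤ ‖u‖ := norm_nonneg u
  have hv0 : 0 ≤ ‖v‖ := norm_nonneg v
  have h2β : (0:ℝ) ≤ (2:ℝ) ^ β := Real.rpow_nonneg (by norm_num) _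
  have htri : ‖F α (u + v) - F α u - F α v‖ ≤
      ‖F α (u + v) - F α u‖ + ‖F α v‖ := by
    have he : F α (u + v) - F α u - F α v = (F α (u + v) - F α u) + (- F α v) := by ring
    rw [he]
    refine (norm_add_le _ _).trans ?_
    rw [norm_neg]
  have h1 : ‖F α (u + v) - F α u‖ ≤
      K * ((‖u + v‖ ^ β + ‖u‖ ^ β) * ‖v‖) := by
    have := key_sym α hα (u + v) u
    simpa using this
  have h2 : ‖u + v‖ ^ β ≤ (2:ℝ) ^ β * ‖u‖ ^ β := by
    have hle : ‖u + v‖ ≤ 2 * ‖u‖ := by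
      have := norm_add_le u v
      linarith
    calc ‖u + v‖ ^ β ≤ (2 * ‖u‖) ^ β :=
          Real.rpow_le_rpow (norm_nonneg _) hle hβ
      _ = (2:ℝ) ^ β * ‖u‖ ^ β := Real.mul_rpow (by norm_num) hu0
  have h3 : ‖F α v‖ ≤ ‖v‖ ^ β * ‖u‖ := by
    refine (F_abs_le α v).trans ?_
    exact mul_le_mul_of_nonneg_left hvu (Real.rpow_nonneg hv0 _)
  have huβ : (0:ℝ) ≤ ‖u‖ ^ β := Real.rpow_nonneg hu0 _
  have hvβ : (0:ℝ) ≤ ‖v‖ ^ β := Real.rpow_nonneg hv0 _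
  have h4 : K * ((‖u + v‖ ^ β + ‖u‖ ^ β) * ‖v‖) ≤
      K * (((2:ℝ) ^ β + 1) * (‖u‖ ^ β * ‖v‖)) := by
    apply mul_le_mul_of_nonneg_left _ hK0
    have : ‖u + v‖ ^ β + ‖u‖ ^ β ≤ ((2:ℝ) ^ β + 1) * ‖u‖ ^ β := by
      linarith
    calc (‖u + v‖ ^ β + ‖u‖ ^ β) * ‖v‖
        ≤ (((2:ℝ) ^ β + 1) * ‖u‖ ^ β) * ‖v‖ :=
          mul_le_mul_of_nonneg_right this hv0
      _ = ((2:ℝ) ^ β + 1) * (‖u‖ ^ β * ‖v‖) := by ring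
  have hP : (0:ℝ) ≤ ‖u‖ ^ β * ‖v‖ := mul_nonneg huβ hv0
  have hQ : (0:ℝ) ≤ ‖v‖ ^ β * ‖u‖ := mul_nonneg hvβ hu0
  have hKc : (0:ℝ) ≤ K * ((2:ℝ) ^ β + 1) := by positivity
  nlinarith [htri, h1, h3, h4]

theorem fPE2_estimate (α : ℝ) (hα : 1 ≤ α) :
    ∃ C > (0 : ℝ), ∀ u v : ℂ,
      ‖((‖u + v‖ ^ (α - 2) : ℝ) : ℂ) * (u + v) ^ 2
          - ((‖u‖ ^ (α - 2) : ℝ) : ℂ) * u ^ 2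
          - ((‖v‖ ^ (α - 2) : ℝ) : ℂ) * v ^ 2‖ ≤
        C * (‖u‖ ^ (α - 1) * ‖v‖
          + ‖v‖ ^ (α - 1) * ‖u‖) := by
  refine ⟨(3 + max 1 (α - 1)) * ((2:ℝ) ^ (α - 1) + 1) + 1, by positivity, ?_⟩
  intro u v
  rcases le_total (‖v‖) (‖u‖) with h | h
  · exact main_half α hα u v h
  · have hmain := main_half α hα v u h
    have he1 : F α (v + u) - F α v - F α u = F α (u + v) - F α u - F α v := by
      rw [add_comm]; ring
    rw [he1] at hmain
    have he2 : ‖v‖ ^ (α - 1) * ‖u‖ + ‖u‖ ^ (α - 1) * ‖v‖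
        = ‖u‖ ^ (α - 1) * ‖v‖ + ‖v‖ ^ (α - 1) * ‖u‖ := by
      ring
    rw [he2] at hmain
    exact hmain
end

section
/- For every real α ≥ 1 there exists a constant C > 0 such that for all complex numbers u, v with u ≠ 0 and |v| ≤ |u|/2 one has | |u+v|^{α−2}(u+v)² − |u|^{α−2}u² | ≤ C |u|^{α−1} |v|. -/
lemma rpow_lip (p : ℝ) : ∃ K > (0:ℝ), ∀ s r : ℝ, 0 < s → s/2 ≤ r → r ≤ 3*s/2 →
    |r ^ p - s ^ p| ≤ K * s ^ (p-1) * |r - s| := by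
  refine ⟨|p| * ((2:ℝ)^(1-p) + (3/2:ℝ)^(p-1)) + 1, by positivity, ?_⟩
  intro s r hs h1 h2
  have hs2 : (0:ℝ) < s/2 := by linarith
  have hIcc : Convex ℝ (Set.Icc (s/2) (3*s/2)) := convex_Icc _ _
  have key : ∀ t ∈ Set.Icc (s/2) (3*s/2),
      HasDerivWithinAt (fun x : ℝ => x ^ p) (p * t ^ (p-1)) (Set.Icc (s/2) (3*s/2)) t := by
    intro t ht
    exact (Real.hasDerivAt_rpow_const (Or.inl (by linarith [ht.1]))).hasDerivWithinAt
  have bound : ∀ t ∈ Set.Icc (s/2) (3*s/2),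
      ‖p * t ^ (p-1)‖ ≤ (|p| * ((2:ℝ)^(1-p) + (3/2:ℝ)^(p-1))) * s ^ (p-1) := by
    intro t ht
    have ht0 : (0:ℝ) < t := lt_of_lt_of_le hs2 ht.1
    have habs : ‖p * t ^ (p-1)‖ = |p| * t ^ (p-1) := by
      rw [norm_mul, Real.norm_eq_abs, Real.norm_eq_abs, abs_of_nonneg (Real.rpow_nonneg ht0.le _)]
    rw [habs]
    have h2p : (s/2) ^ (p-1) = (2:ℝ)^(1-p) * s ^ (p-1) := by
      rw [Real.div_rpow hs.le (by norm_num), show (1:ℝ)-p = -(p-1) by ring,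
        Real.rpow_neg (by norm_num : (0:ℝ) ≤ 2), div_eq_mul_inv, mul_comm]
    have h32 : (3*s/2) ^ (p-1) = (3/2:ℝ)^(p-1) * s ^ (p-1) := by
      have : 3*s/2 = (3/2) * s := by ring
      rw [this, Real.mul_rpow (by norm_num) hs.le]
    have hle : t ^ (p-1) ≤ (s/2) ^ (p-1) + (3*s/2) ^ (p-1) := by
      rcases le_or_gt 0 (p-1) with hp | hp
      · have := Real.rpow_le_rpow ht0.le ht.2 hp
        have h0 : (0:ℝ) ≤ (s/2) ^ (p-1) := Real.rpow_nonneg hs2.le _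
        linarith
      · have := Real.rpow_le_rpow_of_nonpos hs2 ht.1 hp.le
        have h0 : (0:ℝ) ≤ (3*s/2) ^ (p-1) := Real.rpow_nonneg (by linarith) _
        linarith
    calc |p| * t ^ (p-1) ≤ |p| * ((s/2) ^ (p-1) + (3*s/2) ^ (p-1)) := by
            exact mul_le_mul_of_nonneg_left hle (abs_nonneg _)
      _ = (|p| * ((2:ℝ)^(1-p) + (3/2:ℝ)^(p-1))) * s ^ (p-1) := by rw [h2p, h32]; ring
  have hmem_s : s ∈ Set.Icc (s/2) (3*s/2) := ⟨by linarith, by linarith⟩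
  have hmem_r : r ∈ Set.Icc (s/2) (3*s/2) := ⟨h1, h2⟩
  have := hIcc.norm_image_sub_le_of_norm_hasDerivWithin_le key bound hmem_s hmem_r
  simp only [Real.norm_eq_abs] at this
  have hK : (|p| * ((2:ℝ)^(1-p) + (3/2:ℝ)^(p-1))) * s ^ (p-1) * |r - s|
      ≤ (|p| * ((2:ℝ)^(1-p) + (3/2:ℝ)^(p-1)) + 1) * s ^ (p-1) * |r - s| := by
    have : (0:ℝ) ≤ s ^ (p-1) * |r - s| := mul_nonneg (Real.rpow_nonneg hs.le _) (abs_nonneg _)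
    nlinarith
  linarith [this]

theorem fPE2_key_step (α : ℝ) (hα : 1 ≤ α) :
    ∃ C > (0 : ℝ), ∀ u v : ℂ, u ≠ 0 → ‖v‖ ≤ ‖u‖ / 2 →
      ‖((‖u + v‖ ^ (α - 2) : ℝ) : ℂ) * (u + v) ^ 2
          - ((‖u‖ ^ (α - 2) : ℝ) : ℂ) * u ^ 2‖ ≤
        C * ‖u‖ ^ (α - 1) * ‖v‖ := by
  obtain ⟨K, hK, hKbd⟩ := rpow_lip (α - 2)
  refine ⟨9 * K / 4 + 5 / 2, by linarith, ?_⟩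
  intro u v hu hv
  set s := ‖u‖ with hs_def
  set r := ‖u + v‖ with hr_def
  have hs : 0 < s := norm_pos_iff.mpr hu
  have hrs : |r - s| ≤ ‖v‖ := by
    have := abs_norm_sub_norm_le (u + v) u
    simpa using this
  have hr1 : s / 2 ≤ r := by
    cases abs_sub_le_iff.mp hrs with
    | intro h1 h2 => linarith
  have hr2 : r ≤ 3 * s / 2 := by
    cases abs_sub_le_iff.mp hrs with
    | intro h1 h2 => linarith
  have hbd := hKbd s r hs hr1 hr2
  -- split the difference
  have split : ((r ^ (α-2) : ℝ) : ℂ) * (u + v) ^ 2 - ((s ^ (α-2) : ℝ) : ℂ) * u ^ 2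
      = ((r ^ (α-2) - s ^ (α-2) : ℝ) : ℂ) * (u + v) ^ 2
        + ((s ^ (α-2) : ℝ) : ℂ) * (v * (2 * u + v)) := by
    push_cast; ring
  rw [split]
  have e1 : ‖((r ^ (α-2) - s ^ (α-2) : ℝ) : ℂ) * (u + v) ^ 2‖
      = |r ^ (α-2) - s ^ (α-2)| * r ^ 2 := by
    rw [norm_mul, Complex.norm_real, Real.norm_eq_abs, norm_pow]
  have e2 : ‖((s ^ (α-2) : ℝ) : ℂ) * (v * (2 * u + v))‖
      = s ^ (α-2) * (‖v‖ * ‖2 * u + v‖) := by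
    rw [norm_mul, Complex.norm_real, Real.norm_eq_abs, norm_mul,
      abs_of_nonneg (Real.rpow_nonneg (norm_nonneg u) _)]
  have h2uv : ‖2 * u + v‖ ≤ 5 * s / 2 := by
    calc ‖2 * u + v‖ ≤ ‖2 * u‖ + ‖v‖ := norm_add_le _ _
      _ ≤ 2 * s + s / 2 := by
          rw [norm_mul]
          simp only [Complex.norm_two]
          linarith
      _ = 5 * s / 2 := by ring
  have hpow1 : s ^ (α - 3) * s ^ 2 = s ^ (α - 1) := by
    rw [← Real.rpow_natCast s 2, ← Real.rpow_add hs]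
    norm_num
    congr 1; ring
  have hpow2 : s ^ (α - 2) * s = s ^ (α - 1) := by
    nth_rewrite 2 [← Real.rpow_one s]
    rw [← Real.rpow_add hs]
    congr 1; ring
  have t1 : |r ^ (α-2) - s ^ (α-2)| * r ^ 2 ≤ 9 * K / 4 * s ^ (α-1) * ‖v‖ := by
    have hr2' : r ^ 2 ≤ (3 * s / 2) ^ 2 := by
      have hr0 : 0 ≤ r := norm_nonneg _
      nlinarith
    have hb : |r ^ (α-2) - s ^ (α-2)| ≤ K * s ^ (α - 3) * ‖v‖ := by
      calc |r ^ (α-2) - s ^ (α-2)| ≤ K * s ^ (α - 2 - 1) * |r - s| := hbd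
        _ ≤ K * s ^ (α - 3) * ‖v‖ := by
            have : α - 2 - 1 = α - 3 := by ring
            rw [this]
            exact mul_le_mul_of_nonneg_left hrs
              (mul_nonneg hK.le (Real.rpow_nonneg hs.le _))
    calc |r ^ (α-2) - s ^ (α-2)| * r ^ 2
        ≤ (K * s ^ (α - 3) * ‖v‖) * (3 * s / 2) ^ 2 := by
          apply mul_le_mul hb hr2' (by positivity) (by positivity)
      _ = 9 * K / 4 * (s ^ (α - 3) * s ^ 2) * ‖v‖ := by ring
      _ = 9 * K / 4 * s ^ (α-1) * ‖v‖ := by rw [hpow1]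
  have t2 : s ^ (α-2) * (‖v‖ * ‖2 * u + v‖)
      ≤ 5 / 2 * s ^ (α-1) * ‖v‖ := by
    calc s ^ (α-2) * (‖v‖ * ‖2 * u + v‖)
        ≤ s ^ (α-2) * (‖v‖ * (5 * s / 2)) := by
          apply mul_le_mul_of_nonneg_left _ (Real.rpow_nonneg hs.le _)
          exact mul_le_mul_of_nonneg_left h2uv (norm_nonneg _)
      _ = 5 / 2 * (s ^ (α-2) * s) * ‖v‖ := by ring
      _ = 5 / 2 * s ^ (α-1) * ‖v‖ := by rw [hpow2]
  calc ‖_‖ ≤ ‖((r ^ (α-2) - s ^ (α-2) : ℝ) : ℂ) * (u + v) ^ 2‖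
        + ‖((s ^ (α-2) : ℝ) : ℂ) * (v * (2 * u + v))‖ := norm_add_le _ _
    _ ≤ 9 * K / 4 * s ^ (α-1) * ‖v‖ + 5 / 2 * s ^ (α-1) * ‖v‖ := by
        rw [e1, e2]; exact add_le_add t1 t2
    _ = (9 * K / 4 + 5 / 2) * s ^ (α-1) * ‖v‖ := by ring
end

section
/- Under the stated hypotheses on φ, there exists a constant C > 0 such that for every t with −1 ≤ t < 0 one has sup_{x ∈ ℝ^N} |∇U(t,x)| ≤ C (−t)^{−1/α − 1/k_1}, where ∇U(t,·) denotes the gradient of x ↦ U(t,x). -/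
open MeasureTheory Filter

open Asymptotics Topology Bornology Set

/-!
Since `∇U = α⁻¹ (-αt + φ)^(-1/α - 1) ∇φ`, everything rests on the estimate
`|∇φ| ≤ A (φ + φ^(1 - 1/k₁))` on all of `ℝ^N`. Near `x_j` it comes from the asymptotics
`φ(x_j + y) ≍ |y|^(k_j)` and `|∇φ(x_j + y)| ≲ |y|^(k_j - 1) ≤ |y|^(k_j (1 - 1/k₁))`; at infinity
from `|∇φ| ≲ |x|^ν ≲ φ`; near any other point because `φ > 0` there. Compactness of balls glues
these local bounds into a global one off `{x_j}`, and continuity extends it to the `x_j`.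
Finally `(a + φ)^(p - 1) φ^θ ≤ a^(p - 1 + θ)` for `θ = 1` and `θ = 1 - 1/k₁`, with `a = -αt`,
gives the power `(-t)^(-1/α - 1/k₁)` once `-t ≤ 1`.
-/

theorem Module.Basis.isBigO_of_forall_isBigO_apply {α 𝕜 E F G ι : Type*}
    [NontriviallyNormedField 𝕜] [CompleteSpace 𝕜] [NormedAddCommGroup E] [NormedSpace 𝕜 E]
    [NormedAddCommGroup F] [NormedSpace 𝕜 F] [SeminormedAddCommGroup G] [Finite ι]
    (v : Basis ι 𝕜 E) {l : Filter α} {u : α → E →L[𝕜] F} {g : α → G}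
    (h : ∀ i, (fun a => u a (v i)) =O[l] g) : u =O[l] g := by
  cases nonempty_fintype ι
  obtain ⟨C, -, hC⟩ := v.exists_opNorm_le (F := F)
  obtain ⟨c, hc, hcg⟩ := (isBigO_pi.2 h).exists_nonneg
  refine .of_bound (C * c) ?_
  filter_upwards [hcg.bound] with a ha
  rw [mul_assoc]
  exact hC (by positivity) fun i => (norm_le_pi_norm (fun i => u a (v i)) i).trans ha

theorem ContinuousAt.isBigO_nhds_of_ne_zero {X E F : Type*} [TopologicalSpace X]
    [NormedAddCommGroup E] [NormedAddCommGroup F] {f : X → E} {g : X → F} {z : X}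
    (hf : ContinuousAt f z) (hg : ContinuousAt g z) (hgz : g z ≠ 0) : f =O[𝓝 z] g := by
  refine (hf.tendsto.isBigO_one ℝ).trans ((isBigO_const_left_iff_pos_le_norm one_ne_zero).2
    ⟨‖g z‖ / 2, by positivity, ?_⟩)
  exact hg.norm.eventually (eventually_ge_nhds (half_lt_self (norm_pos_iff.2 hgz)))

theorem IsCompact.isBigO_principal_inter {X E F : Type*} [TopologicalSpace X]
    [NormedAddCommGroup E] [NormedAddCommGroup F] {f : X → E} {g : X → F} {K s : Set X}
    (hK : IsCompact K) (hloc : ∀ z ∈ K, f =O[𝓝[s] z] g) : f =O[𝓟 (K ∩ s)] g := by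
  refine hK.induction_on (p := fun t => f =O[𝓟 (t ∩ s)] g) ?_ ?_ ?_ ?_
  · simp
  · intro t t' hsub h
    exact h.mono (principal_mono.2 (inter_subset_inter_left _ hsub))
  · intro t t' h h'
    rw [union_inter_distrib_right, ← sup_principal]
    exact h.sup h'
  · intro z hz
    obtain ⟨c, hc⟩ := (hloc z hz).bound
    obtain ⟨u, hu, hzu, hus⟩ := mem_nhdsWithin.1 hc
    exact ⟨u, mem_nhdsWithin_of_mem_nhds (hu.mem_nhds hzu),
      isBigO_principal.2 ⟨c, fun y hy => hus hy⟩⟩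

theorem Asymptotics.isBigO_principal_of_forall_nhdsWithin {X E F : Type*} [PseudoMetricSpace X]
    [ProperSpace X] [NormedAddCommGroup E] [NormedAddCommGroup F] {f : X → E} {g : X → F}
    {s : Set X} (hloc : ∀ z, f =O[𝓝[s] z] g) (hfar : f =O[cobounded X] g) : f =O[𝓟 s] g := by
  obtain ⟨c, hc⟩ := hfar.bound
  set good := {y | ‖f y‖ ≤ c * ‖g y‖}
  have hbad : IsCompact (closure goodᶜ) := by
    refine IsBounded.isCompact_closure ?_
    rw [isBounded_def, compl_compl]
    exact hc
  have hgood : f =O[𝓟 good] g := isBigO_principal.2 ⟨c, fun y hy => hy⟩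
  refine ((hbad.isBigO_principal_inter fun z _ => hloc z).sup hgood).mono ?_
  rw [sup_principal]
  refine principal_mono.2 fun y hy => ?_
  by_cases hyg : y ∈ good
  · exact Or.inr hyg
  · exact Or.inl ⟨subset_closure hyg, hy⟩

theorem Asymptotics.IsBigO.isBigO_top_of_dense {X E F : Type*} [TopologicalSpace X]
    [NormedAddCommGroup E] [NormedAddCommGroup F] {f : X → E} {g : X → F} {s : Set X}
    (h : f =O[𝓟 s] g) (hs : Dense s) (hf : Continuous f) (hg : Continuous g) : f =O[⊤] g := by
  obtain ⟨c, hc⟩ := isBigO_principal.1 h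
  exact isBigO_top.2 ⟨c, hs.induction hc (isClosed_le (by fun_prop) (by fun_prop))⟩

theorem isBigO_norm_rpow_of_tendsto {E : Type*} [NormedAddCommGroup E] {f : E → ℝ} {e c : ℝ}
    (h : Tendsto (fun y => ‖y‖ ^ (-e) * f y) (𝓝[≠] 0) (𝓝 c)) :
    f =O[𝓝[≠] 0] fun y => ‖y‖ ^ e := by
  refine isBigO_of_div_tendsto_nhds ?_ c (h.congr fun y => ?_)
  · filter_upwards [self_mem_nhdsWithin] with y hy h0
    exact absurd h0 (Real.rpow_pos_of_pos (norm_pos_iff.2 hy) e).ne'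
  · simp [Real.rpow_neg (norm_nonneg y), div_eq_inv_mul]

theorem isTheta_norm_rpow_of_tendsto {E : Type*} [NormedAddCommGroup E] {l : Filter E}
    {f : E → ℝ} {e c : ℝ} (h : Tendsto (fun y => ‖y‖ ^ (-e) * f y) l (𝓝 c)) (hc : c ≠ 0) :
    (fun y => ‖y‖ ^ e) =Θ[l] f :=
  isTheta_of_div_tendsto_nhds_ne_zero (h.congr fun y => by
    simp [Real.rpow_neg (norm_nonneg y), div_eq_inv_mul]) hc

theorem norm_rpow_isBigO_norm_rpow_of_le {E : Type*} [NormedAddCommGroup E] {a b : ℝ}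
    (hab : a ≤ b) : (fun y : E => ‖y‖ ^ b) =O[𝓝[≠] 0] fun y => ‖y‖ ^ a := by
  refine .of_bound' ?_
  filter_upwards [self_mem_nhdsWithin,
    nhdsWithin_le_nhds (Metric.closedBall_mem_nhds (0 : E) one_pos)] with y hy0 hy1
  rw [Real.norm_of_nonneg (by positivity), Real.norm_of_nonneg (by positivity)]
  exact Real.rpow_le_rpow_of_exponent_ge (norm_pos_iff.2 hy0) (by simpa using hy1) hab

theorem isBigO_norm_rpow_cobounded_of_bound {E : Type*} [NormedAddCommGroup E] {f : E → ℝ}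
    {ν : ℝ} (h : ∃ C R : ℝ, ∀ y : E, R ≤ ‖y‖ → ‖y‖ ^ (-ν) * |f y| ≤ C) :
    f =O[cobounded E] fun y => ‖y‖ ^ ν := by
  obtain ⟨C, R, hCR⟩ := h
  refine .of_bound C ?_
  filter_upwards [tendsto_norm_cobounded_atTop.eventually (eventually_ge_atTop (max R 1))]
    with y hy
  have hy0 : 0 < ‖y‖ := by linarith [le_max_right R 1]
  have hCy := hCR y ((le_max_left _ _).trans hy)
  rw [Real.rpow_neg hy0.le, inv_mul_le_iff₀ (by positivity)] at hCy
  rwa [Real.norm_eq_abs, Real.norm_of_nonneg (by positivity), mul_comm]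

theorem norm_rpow_isBigO_cobounded_of_le {E : Type*} [NormedAddCommGroup E] {f : E → ℝ}
    {ν : ℝ} (h : ∃ c > (0 : ℝ), ∃ R : ℝ, ∀ y : E, R ≤ ‖y‖ → c ≤ ‖y‖ ^ (-ν) * f y) :
    (fun y => ‖y‖ ^ ν) =O[cobounded E] f := by
  obtain ⟨c, hc, R, hcR⟩ := h
  refine .of_bound c⁻¹ ?_
  filter_upwards [tendsto_norm_cobounded_atTop.eventually (eventually_ge_atTop (max R 1))]
    with y hy
  have hy0 : 0 < ‖y‖ := by linarith [le_max_right R 1]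
  have hcy := hcR y ((le_max_left _ _).trans hy)
  rw [Real.rpow_neg hy0.le, le_inv_mul_iff₀ (by positivity)] at hcy
  rw [Real.norm_of_nonneg (by positivity), le_inv_mul_iff₀ hc, mul_comm]
  exact hcy.trans (le_abs_self _)

theorem nonneg_of_pos_of_forall_ne {E ι : Type*} [NormedAddCommGroup E] [NormedSpace ℝ E]
    [Nontrivial E] [Countable ι] {φ : E → ℝ} (hφ : Continuous φ) (x : ι → E)
    (hpos : ∀ y, (∀ j, y ≠ x j) → 0 < φ y) (y : E) : 0 ≤ φ y :=
  ((countable_range x).dense_compl ℝ).induction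
    (fun z hz => (hpos z fun j hj => hz ⟨j, hj.symm⟩).le)
    (isClosed_le continuous_const hφ) y

theorem fderiv_isBigO_abs_rpow_nhdsNE {ι : Type*} [Fintype ι] [DecidableEq ι]
    {φ : EuclideanSpace ℝ ι → ℝ} {x₀ : EuclideanSpace ℝ ι} {κ q c : ℝ} {c' : ι → ℝ}
    (hq : 0 ≤ q) (hqκ : q * κ ≤ κ - 1) (hc : c ≠ 0) (h₀ : Tendsto (fun y => ‖y‖ ^ (-κ) * |φ (x₀ + y)|) (𝓝[≠] 0) (𝓝 c))
    (h₁ : ∀ i, Tendsto (fun y => ‖y‖ ^ (-κ + 1) *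
      |fderiv ℝ φ (x₀ + y) (EuclideanSpace.single i 1)|) (𝓝[≠] 0) (𝓝 (c' i))) :
    fderiv ℝ φ =O[𝓝[≠] x₀] fun y => |φ y| ^ q := by
  rw [← add_zero x₀, ← map_add_left_nhdsNE, isBigO_map]
  have hD : (fun y => fderiv ℝ φ (x₀ + y)) =O[𝓝[≠] 0] fun y => ‖y‖ ^ (κ - 1) :=
    (EuclideanSpace.basisFun ι ℝ).toBasis.isBigO_of_forall_isBigO_apply fun i => by
      simpa [isBigO_abs_left] using isBigO_norm_rpow_of_tendsto (e := κ - 1)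
        (f := fun y => |fderiv ℝ φ (x₀ + y) (EuclideanSpace.single i 1)|)
        (by simpa only [neg_sub, neg_add_eq_sub] using h₁ i)
  have hpow : (fun y : EuclideanSpace ℝ ι => ‖y‖ ^ (κ - 1)) =O[𝓝[≠] 0]
      fun y => (‖y‖ ^ κ) ^ q := by
    simpa only [← Real.rpow_mul (norm_nonneg _), mul_comm κ q] using
      norm_rpow_isBigO_norm_rpow_of_le hqκ
  have hφ : (fun y : EuclideanSpace ℝ ι => (‖y‖ ^ κ) ^ q) =O[𝓝[≠] 0]
      fun y => |φ (x₀ + y)| ^ q :=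
    (isTheta_norm_rpow_of_tendsto h₀ hc).isBigO.rpow hq (.of_forall fun y => abs_nonneg _)
  exact hD.trans (hpow.trans hφ)

theorem fderiv_isBigO_add_rpow {ι : Type*} [Fintype ι] [DecidableEq ι] [Nonempty ι] {J : ℕ}
    {φ : EuclideanSpace ℝ ι → ℝ} (hφ : ContDiff ℝ 1 φ) (x : Fin J → EuclideanSpace ℝ ι)
    (hpos : ∀ y, (∀ j, y ≠ x j) → 0 < φ y) {k : Fin J → ℝ} {q : ℝ} (hq : 0 ≤ q)
    (hqk : ∀ j, q * k j ≤ k j - 1) {η₀ : Fin J → ℝ} {η₁ : Fin J → ι → ℝ} (hη₀ : ∀ j, η₀ j ≠ 0)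
    (h₀ : ∀ j, Tendsto (fun y => ‖y‖ ^ (-k j) * |φ (x j + y)|) (𝓝[≠] 0) (𝓝 (η₀ j)))
    (h₁ : ∀ j i, Tendsto (fun y => ‖y‖ ^ (-k j + 1) *
      |fderiv ℝ φ (x j + y) (EuclideanSpace.single i 1)|) (𝓝[≠] 0) (𝓝 (η₁ j i)))
    {ν : ℝ} (hinf : ∃ c > (0 : ℝ), ∃ R : ℝ, ∀ y, R ≤ ‖y‖ → c ≤ ‖y‖ ^ (-ν) * φ y)
    (hsup : ∀ i, ∃ C R : ℝ, ∀ y, R ≤ ‖y‖ →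
      ‖y‖ ^ (-ν) * |fderiv ℝ φ y (EuclideanSpace.single i 1)| ≤ C) :
    fderiv ℝ φ =O[⊤] fun y => φ y + φ y ^ q := by
  set g := fun y => φ y + φ y ^ q
  have hnn := nonneg_of_pos_of_forall_ne hφ.continuous x hpos
  have hg : Continuous g := hφ.continuous.add (hφ.continuous.rpow_const fun _ => Or.inr hq)
  have hgnorm : ∀ y, ‖g y‖ = φ y + φ y ^ q := fun y =>
    Real.norm_of_nonneg (add_nonneg (hnn y) (Real.rpow_nonneg (hnn y) q))
  have hφ_le : (fun y => φ y) =O[⊤] g := isBigO_of_le _ fun y => by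
    rw [hgnorm, Real.norm_of_nonneg (hnn y)]
    exact le_add_of_nonneg_right (Real.rpow_nonneg (hnn y) q)
  have hrpow_le : (fun y => |φ y| ^ q) =O[⊤] g := isBigO_of_le _ fun y => by
    rw [hgnorm, abs_of_nonneg (hnn y), Real.norm_of_nonneg (Real.rpow_nonneg (hnn y) q)]
    exact le_add_of_nonneg_left (hnn y)
  have hloc : ∀ z, fderiv ℝ φ =O[𝓝[(range x)ᶜ] z] g := by
    intro z
    by_cases hz : z ∈ range x
    · obtain ⟨j, rfl⟩ := hz
      refine ((fderiv_isBigO_abs_rpow_nhdsNE hq (hqk j) (hη₀ j) (h₀ j) (h₁ j)).trans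
        (hrpow_le.mono le_top)).mono (nhdsWithin_mono _ ?_)
      exact compl_subset_compl.2 (singleton_subset_iff.2 (mem_range_self j))
    · have hgz : g z ≠ 0 :=
        (add_pos_of_pos_of_nonneg (hpos z fun j hj => hz ⟨j, hj.symm⟩)
          (Real.rpow_nonneg (hnn z) q)).ne'
      exact ((hφ.continuous_fderiv one_ne_zero).continuousAt.isBigO_nhds_of_ne_zero
        hg.continuousAt hgz).mono nhdsWithin_le_nhds
  have hfar : fderiv ℝ φ =O[cobounded _] g :=
    (((EuclideanSpace.basisFun ι ℝ).toBasis.isBigO_of_forall_isBigO_apply fun i => by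
      simpa using isBigO_norm_rpow_cobounded_of_bound (hsup i)).trans
      (norm_rpow_isBigO_cobounded_of_le hinf)).trans (hφ_le.mono le_top)
  exact (isBigO_principal_of_forall_nhdsWithin hloc hfar).isBigO_top_of_dense
    ((countable_range x).dense_compl ℝ) (hφ.continuous_fderiv one_ne_zero) hg

theorem norm_gradient_const_add_rpow {E : Type*} [NormedAddCommGroup E] [InnerProductSpace ℝ E]
    [CompleteSpace E] {φ : E → ℝ} {y : E} (hφ : DifferentiableAt ℝ φ y) {a p : ℝ}
    (hpos : 0 < a + φ y) :
    ‖gradient (fun z => (a + φ z) ^ p) y‖ = |p| * (a + φ y) ^ (p - 1) * ‖fderiv ℝ φ y‖ := by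
  rw [((hφ.hasFDerivAt.const_add a).rpow_const (Or.inl hpos.ne')).hasGradientAt.gradient,
    map_smul, norm_smul, LinearIsometryEquiv.norm_map, Real.norm_eq_abs, abs_mul,
    abs_of_pos (Real.rpow_pos_of_pos hpos _), mul_assoc]

theorem add_rpow_sub_one_mul_rpow_le {a b p q : ℝ} (ha : 0 < a) (hb : 0 ≤ b) (hq : 0 ≤ q)
    (hpq : p - 1 + q ≤ 0) : (a + b) ^ (p - 1) * b ^ q ≤ a ^ (p - 1 + q) := by
  have hab : 0 < a + b := by positivity
  calc (a + b) ^ (p - 1) * b ^ q ≤ (a + b) ^ (p - 1) * (a + b) ^ q := by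
        gcongr; linarith
    _ = (a + b) ^ (p - 1 + q) := (Real.rpow_add hab _ _).symm
    _ ≤ a ^ (p - 1 + q) := Real.rpow_le_rpow_of_nonpos ha (by linarith) hpq

theorem mul_add_rpow_sub_one_mul_add_rpow_le {α s b p r : ℝ} (hα : 0 < α) (hs : 0 < s)
    (hs₁ : s ≤ 1) (hb : 0 ≤ b) (hr : 0 ≤ r) (hr₁ : r ≤ 1) (hp : p ≤ 0) :
    (α * s + b) ^ (p - 1) * (b + b ^ (1 - r)) ≤ (α ^ p + α ^ (p - r)) * s ^ (p - r) := by
  have hαs : 0 < α * s := by positivity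
  have h₁ := add_rpow_sub_one_mul_rpow_le hαs hb zero_le_one (q := 1) (p := p) (by linarith)
  have h₂ := add_rpow_sub_one_mul_rpow_le hαs hb (q := 1 - r) (p := p) (by linarith)
    (by linarith)
  rw [Real.rpow_one, sub_add_cancel, Real.mul_rpow hα.le hs.le] at h₁
  rw [show p - 1 + (1 - r) = p - r by ring, Real.mul_rpow hα.le hs.le] at h₂
  have hsp : s ^ p ≤ s ^ (p - r) := Real.rpow_le_rpow_of_exponent_ge hs hs₁ (by linarith)
  have hαp : 0 ≤ α ^ p := by positivity
  nlinarith

theorem one_sub_one_div_mul_le {a b : ℝ} (ha : 0 < a) (hab : a ≤ b) :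
    (1 - 1 / a) * b ≤ b - 1 := by
  have : 1 ≤ b / a := (one_le_div ha).2 hab
  rw [sub_mul, one_mul, one_div_mul_eq_div]
  linarith

theorem norm_gradient_mul_add_rpow_le {E : Type*} [NormedAddCommGroup E]
    [InnerProductSpace ℝ E] [CompleteSpace E] {φ : E → ℝ} {y : E} (hφ : DifferentiableAt ℝ φ y)
    (hφy : 0 ≤ φ y) {α s r A : ℝ} (hα : 0 < α) (hs : 0 < s) (hs₁ : s ≤ 1) (hr : 0 ≤ r)
    (hr₁ : r ≤ 1) (hA : 0 ≤ A) (hD : ‖fderiv ℝ φ y‖ ≤ A * (φ y + φ y ^ (1 - r))) :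
    ‖gradient (fun z => (α * s + φ z) ^ (-1 / α)) y‖
      ≤ A / α * (α ^ (-1 / α) + α ^ (-1 / α - r)) * s ^ (-1 / α - r) := by
  have hp : -1 / α ≤ 0 := by rw [neg_div]; exact neg_nonpos.2 (by positivity)
  rw [norm_gradient_const_add_rpow hφ (by positivity), abs_div, abs_neg, abs_one, abs_of_pos hα]
  calc 1 / α * (α * s + φ y) ^ (-1 / α - 1) * ‖fderiv ℝ φ y‖
      ≤ 1 / α * (α * s + φ y) ^ (-1 / α - 1) * (A * (φ y + φ y ^ (1 - r))) := by gcongr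
    _ = A / α * ((α * s + φ y) ^ (-1 / α - 1) * (φ y + φ y ^ (1 - r))) := by ring
    _ ≤ A / α * ((α ^ (-1 / α) + α ^ (-1 / α - r)) * s ^ (-1 / α - r)) := by
        gcongr ?_ * ?_
        exact mul_add_rpow_sub_one_mul_add_rpow_le hα hs hs₁ hφy hr hr₁ hp
    _ = _ := by ring

theorem gradU_Linfty_bound_general (N : ℕ) (hN : 1 ≤ N) (α : ℝ) (hα : 0 < α)
    (J : ℕ) (hJ : 1 ≤ J) (ν : ℝ)
    (x : Fin J → EuclideanSpace ℝ (Fin N))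
    (k : Fin J → ℝ) (hkmono : Monotone k)
    (hk1 : 10 < k ⟨0, hJ⟩)
    (η : Fin J → (m : ℕ) → (Fin m → Fin N) → ℝ)
    (hη : ∀ (j : Fin J) (m : ℕ) (v : Fin m → Fin N), m ≤ 3 → 0 < η j m v)
    (φ : EuclideanSpace ℝ (Fin N) → ℝ) (hφ : ContDiff ℝ 3 φ)
    (hφpos : ∀ y : EuclideanSpace ℝ (Fin N), (∀ j : Fin J, y ≠ x j) → 0 < φ y)
    (hφloc : ∀ (j : Fin J) (m : ℕ), m ≤ 3 → ∀ v : Fin m → Fin N,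
      Tendsto (fun y : EuclideanSpace ℝ (Fin N) =>
          ‖y‖ ^ (-(k j) + (m : ℝ)) *
            |iteratedFDeriv ℝ m φ (x j + y) (fun i => EuclideanSpace.single (v i) 1)|)
        (nhdsWithin 0 {0}ᶜ) (nhds (η j m v)))
    (hφinf : ∃ c > (0 : ℝ), ∃ R : ℝ, ∀ y : EuclideanSpace ℝ (Fin N),
      R ≤ ‖y‖ → c ≤ ‖y‖ ^ (-ν) * φ y)
    (hφsup : ∀ (m : ℕ), 1 ≤ m → m ≤ 3 → ∀ v : Fin m → Fin N,
      ∃ C R : ℝ, ∀ y : EuclideanSpace ℝ (Fin N), R ≤ ‖y‖ →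
        ‖y‖ ^ (-ν) * |iteratedFDeriv ℝ m φ y (fun i => EuclideanSpace.single (v i) 1)| ≤ C) :
    ∃ C > (0 : ℝ), ∀ t : ℝ, -1 ≤ t → t < 0 → ∀ y : EuclideanSpace ℝ (Fin N),
      ‖gradient (fun z : EuclideanSpace ℝ (Fin N) => (-α * t + φ z) ^ (-1 / α)) y‖
        ≤ C * (-t) ^ (-1 / α - 1 / k ⟨0, hJ⟩) := by
  have : Nonempty (Fin N) := ⟨⟨0, hN⟩⟩
  set k₁ := k ⟨0, hJ⟩
  have hk₁ : 0 < k₁ := by linarith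
  have hφ₁ : ContDiff ℝ 1 φ := hφ.of_le (by norm_num)
  have hnn := nonneg_of_pos_of_forall_ne hφ₁.continuous x hφpos
  obtain ⟨A, hA, hbound⟩ := (fderiv_isBigO_add_rpow hφ₁ x hφpos (k := k) (q := 1 - 1 / k₁)
    (by rw [sub_nonneg, div_le_one hk₁]; linarith)
    (fun j => one_sub_one_div_mul_le hk₁ (hkmono (Nat.zero_le j.val)))
    (fun j => (hη j 0 Fin.elim0 (by norm_num)).ne')
    (fun j => by simpa using hφloc j 0 (by norm_num) Fin.elim0)
    (fun j i => by simpa [iteratedFDeriv_one_apply] using hφloc j 1 (by norm_num) fun _ => i)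
    hφinf
    (fun i => by
      simpa [iteratedFDeriv_one_apply] using hφsup 1 le_rfl (by norm_num) fun _ => i)).exists_pos
  rw [isBigOWith_top] at hbound
  refine ⟨A / α * (α ^ (-1 / α) + α ^ (-1 / α - 1 / k₁)), by positivity,
    fun t ht₁ ht₀ y => ?_⟩
  rw [show -α * t = α * -t by ring]
  refine norm_gradient_mul_add_rpow_le (hφ₁.differentiable one_ne_zero y) (hnn y) hα
    (by linarith) (by linarith) (by positivity) ((div_le_one hk₁).2 (by linarith)) hA.le ?_
  have hnorm : ‖φ y + φ y ^ (1 - 1 / k₁)‖ = φ y + φ y ^ (1 - 1 / k₁) :=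
    Real.norm_of_nonneg (add_nonneg (hnn y) (Real.rpow_nonneg (hnn y) _))
  exact hnorm ▸ hbound y

theorem gradU_Linfty_bound (N : ℕ) (hN : 1 ≤ N) (α : ℝ) (hα : 0 < α)
    (J : ℕ) (hJ : 1 ≤ J) (ρ ν : ℝ) (hρ : 0 < ρ) (hν : (N : ℝ) * α / 2 < ν)
    (x : Fin J → EuclideanSpace ℝ (Fin N))
    (hsep : ∀ j ℓ : Fin J, j ≠ ℓ → 2 * ρ ≤ ‖x j - x ℓ‖)
    (k : Fin J → ℝ) (hkmono : Monotone k)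
    (hk1 : 10 < k ⟨0, hJ⟩) (hkJ : (N : ℝ) * α / 2 < k ⟨J - 1, Nat.sub_lt hJ Nat.one_pos⟩)
    (η : Fin J → (m : ℕ) → (Fin m → Fin N) → ℝ)
    (hη : ∀ (j : Fin J) (m : ℕ) (v : Fin m → Fin N), m ≤ 3 → 0 < η j m v)
    (φ : EuclideanSpace ℝ (Fin N) → ℝ) (hφ : ContDiff ℝ 3 φ)
    (hφpos : ∀ y : EuclideanSpace ℝ (Fin N), (∀ j : Fin J, y ≠ x j) → 0 < φ y)
    (hφloc : ∀ (j : Fin J) (m : ℕ), m ≤ 3 → ∀ v : Fin m → Fin N,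
      Tendsto (fun y : EuclideanSpace ℝ (Fin N) =>
          ‖y‖ ^ (-(k j) + (m : ℝ)) *
            |iteratedFDeriv ℝ m φ (x j + y) (fun i => EuclideanSpace.single (v i) 1)|)
        (nhdsWithin 0 {0}ᶜ) (nhds (η j m v)))
    (hφinf : ∃ c > (0 : ℝ), ∃ R : ℝ, ∀ y : EuclideanSpace ℝ (Fin N),
      R ≤ ‖y‖ → c ≤ ‖y‖ ^ (-ν) * φ y)
    (hφsup : ∀ (m : ℕ), 1 ≤ m → m ≤ 3 → ∀ v : Fin m → Fin N,
      ∃ C R : ℝ, ∀ y : EuclideanSpace ℝ (Fin N), R ≤ ‖y‖ →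
        ‖y‖ ^ (-ν) * |iteratedFDeriv ℝ m φ y (fun i => EuclideanSpace.single (v i) 1)| ≤ C) :
    ∃ C > (0 : ℝ), ∀ t : ℝ, -1 ≤ t → t < 0 → ∀ y : EuclideanSpace ℝ (Fin N),
      ‖gradient (fun z : EuclideanSpace ℝ (Fin N) => (-α * t + φ z) ^ (-1 / α)) y‖
        ≤ C * (-t) ^ (-1 / α - 1 / k ⟨0, hJ⟩) :=
  gradU_Linfty_bound_general N hN α hα J hJ ν x k hkmono hk1 η hη φ hφ hφpos hφloc hφinf hφsup
end
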